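/- Monotonicity of the analysis covariance: if R > 0 and Q ≥ 0, then 0 ≤ A(Q) ≤ Q, where A(Q) = Q − Q H*(H Q H* + R)^{-1} H Q; consequently |A(Q)| ≤ |Q|. -/

import Mathlib

/-!
Write `S = H Q H* + R` and `K = Q H* S⁻¹` for the Kalman gain. Then `Q - A(Q) = K S K*`, and
`A(Q)` equals the Joseph form `(I - K H) Q (I - K H)* + K R K*`; both are conjugates of positive
operators, hence positive. For `0 ≤ A ≤ B` every Rayleigh quotient of `A` is bounded by one of
`B`, and the norm of a self-adjoint operator is the supremum of its absolute Rayleigh quotients.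
-/

open ContinuousLinearMap RealInnerProductSpace

variable {V W : Type*} [NormedAddCommGroup V] [InnerProductSpace ℝ V] [CompleteSpace V]
  [NormedAddCommGroup W] [InnerProductSpace ℝ W] [CompleteSpace W]

/-- The analysis covariance map `A(Q) = Q − Q H* (H Q H* + R)⁻¹ H Q`. -/
noncomputable def analysisCov (H : V →L[ℝ] W) (R : W →L[ℝ] W) (Q : V →L[ℝ] V) : V →L[ℝ] V :=
  Q - (Q ∘L ContinuousLinearMap.adjoint H) ∘L
    Ring.inverse (H ∘L Q ∘L ContinuousLinearMap.adjoint H + R) ∘L (H ∘L Q)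

open scoped InnerProduct

namespace ContinuousLinearMap

theorem norm_le_norm_of_nonneg_of_le {𝕜 E : Type*} [RCLike 𝕜] [NormedAddCommGroup E]
    [InnerProductSpace 𝕜 E] {A B : E →L[𝕜] E} (hA : 0 ≤ A) (hAB : A ≤ B) : ‖A‖ ≤ ‖B‖ := by
  rw [nonneg_iff_isPositive] at hA
  rw [norm_eq_iSup_rayleighQuotient A hA.isSymmetric]
  refine ciSup_le fun x ↦ ?_
  have hBA : 0 ≤ (B - A).rayleighQuotient x := div_nonneg (hAB.2 x) (by positivity)
  calc |A.rayleighQuotient x| = A.rayleighQuotient x :=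
        abs_of_nonneg (div_nonneg (hA.2 x) (by positivity))
    _ ≤ A.rayleighQuotient x + (B - A).rayleighQuotient x := le_add_of_nonneg_right hBA
    _ = B.rayleighQuotient x := by rw [← rayleighQuotient_add, add_sub_cancel]
    _ ≤ ‖B‖ := (le_abs_self _).trans (B.rayleighQuotient_le_norm x)

theorem isUnit_of_coercive {E : Type*} [NormedAddCommGroup E] [InnerProductSpace ℝ E]
    [CompleteSpace E] {S : E →L[ℝ] E} {α : ℝ} (hα : 0 < α)
    (hS : ∀ u, α * ‖u‖ ^ 2 ≤ ⟪S u, u⟫) : IsUnit S :=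
  isUnit_of_forall_le_norm_inner_map S (c := ⟨α, hα.le⟩) hα fun u ↦ by
    show ‖u‖ ^ 2 * α ≤ _
    exact (mul_comm α _ ▸ hS u).trans (Real.le_norm_self _)

end ContinuousLinearMap

section KalmanGain

variable (H : V →L[ℝ] W) (R : W →L[ℝ] W) (Q : V →L[ℝ] V)

noncomputable def innovationCov : W →L[ℝ] W := H ∘L Q ∘L H† + R

noncomputable def kalmanGain : W →L[ℝ] V := Q ∘L H† ∘L Ring.inverse (innovationCov H R Q)

noncomputable def josephForm (K : W →L[ℝ] V) : V →L[ℝ] V :=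
  (.id ℝ V - K ∘L H) ∘L Q ∘L (.id ℝ V - K ∘L H)† + K ∘L R ∘L K†

theorem josephForm_eq (K : W →L[ℝ] V) :
    josephForm H R Q K = Q - K ∘L H ∘L Q - Q ∘L H† ∘L K† + K ∘L innovationCov H R Q ∘L K† := by
  simp only [josephForm, innovationCov, map_sub, adjoint_comp, adjoint_id, sub_comp, comp_sub,
    add_comp, comp_add, id_comp, comp_id, comp_assoc]
  abel

theorem analysisCov_eq_sub_kalmanGain :
    analysisCov H R Q = Q - kalmanGain H R Q ∘L H ∘L Q := by
  simp only [analysisCov, kalmanGain, innovationCov, comp_assoc]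

variable {H R Q}

theorem isPositive_innovationCov (hQ : Q.IsPositive) (hR : R.IsPositive) :
    (innovationCov H R Q).IsPositive :=
  (hQ.conj_adjoint H).add hR

theorem isUnit_innovationCov (hQ : Q.IsPositive) {α : ℝ} (hα : 0 < α)
    (hR : ∀ u, α * ‖u‖ ^ 2 ≤ ⟪R u, u⟫) : IsUnit (innovationCov H R Q) :=
  isUnit_of_coercive hα fun u ↦ by
    rw [innovationCov, add_apply, inner_add_left]
    exact le_add_of_nonneg_of_le ((hQ.conj_adjoint H).inner_nonneg_left u) (hR u)

theorem isPositive_josephForm (hQ : Q.IsPositive) (hR : R.IsPositive) (K : W →L[ℝ] V) :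
    (josephForm H R Q K).IsPositive :=
  (hQ.conj_adjoint _).add (hR.conj_adjoint K)

theorem adjoint_kalmanGain (hQ : IsSelfAdjoint Q) (hR : IsSelfAdjoint R) :
    (kalmanGain H R Q)† = Ring.inverse (innovationCov H R Q) ∘L H ∘L Q := by
  have hS : IsSelfAdjoint (innovationCov H R Q) := (hQ.conj_adjoint H).add hR
  rw [kalmanGain, adjoint_comp, adjoint_comp, hS.ringInverse.adjoint_eq, adjoint_adjoint,
    hQ.adjoint_eq, comp_assoc]

theorem comp_adjoint_comp_adjoint_kalmanGain (hQ : IsSelfAdjoint Q) (hR : IsSelfAdjoint R) :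
    Q ∘L H† ∘L (kalmanGain H R Q)† = kalmanGain H R Q ∘L H ∘L Q := by
  rw [adjoint_kalmanGain hQ hR]
  simp only [kalmanGain, comp_assoc]

theorem kalmanGain_comp_innovationCov (hS : IsUnit (innovationCov H R Q)) :
    kalmanGain H R Q ∘L innovationCov H R Q = Q ∘L H† := by
  rw [kalmanGain, comp_assoc, comp_assoc, ← mul_def, Ring.inverse_mul_cancel _ hS, one_def,
    comp_id]

theorem kalmanGain_conj_innovationCov (hQ : IsSelfAdjoint Q) (hR : IsSelfAdjoint R)
    (hS : IsUnit (innovationCov H R Q)) :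
    kalmanGain H R Q ∘L innovationCov H R Q ∘L (kalmanGain H R Q)† =
      kalmanGain H R Q ∘L H ∘L Q := by
  rw [← comp_assoc, kalmanGain_comp_innovationCov hS, comp_assoc,
    comp_adjoint_comp_adjoint_kalmanGain hQ hR]

theorem sub_analysisCov_eq (hQ : IsSelfAdjoint Q) (hR : IsSelfAdjoint R)
    (hS : IsUnit (innovationCov H R Q)) :
    Q - analysisCov H R Q =
      kalmanGain H R Q ∘L innovationCov H R Q ∘L (kalmanGain H R Q)† := by
  rw [analysisCov_eq_sub_kalmanGain, sub_sub_cancel, kalmanGain_conj_innovationCov hQ hR hS]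

theorem josephForm_kalmanGain (hQ : IsSelfAdjoint Q) (hR : IsSelfAdjoint R)
    (hS : IsUnit (innovationCov H R Q)) :
    josephForm H R Q (kalmanGain H R Q) = analysisCov H R Q := by
  rw [josephForm_eq, comp_adjoint_comp_adjoint_kalmanGain hQ hR,
    kalmanGain_conj_innovationCov hQ hR hS, analysisCov_eq_sub_kalmanGain, sub_add_cancel]

end KalmanGain

/-- If `R > 0` and `Q ≥ 0`, then `0 ≤ A(Q) ≤ Q` in the Loewner order, and
consequently `|A(Q)| ≤ |Q|`. -/
theorem analysisCov_monotone
    (H : V →L[ℝ] W) (R : W →L[ℝ] W) (Q : V →L[ℝ] V)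
    (hQ : Q.IsPositive) (hRsym : IsSelfAdjoint R)
    (hRpos : ∃ α : ℝ, 0 < α ∧ ∀ u : W, α * ‖u‖ ^ 2 ≤ ⟪R u, u⟫) :
    (analysisCov H R Q).IsPositive ∧ (Q - analysisCov H R Q).IsPositive ∧
      ‖analysisCov H R Q‖ ≤ ‖Q‖ := by
  obtain ⟨α, hα, hRα⟩ := hRpos
  have hR : R.IsPositive :=
    (isPositive_iff' R).2 ⟨hRsym, fun u ↦ (by positivity : 0 ≤ α * ‖u‖ ^ 2).trans (hRα u)⟩
  have hS : IsUnit (innovationCov H R Q) := isUnit_innovationCov hQ hα hRα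
  have hA : (analysisCov H R Q).IsPositive := by
    rw [← josephForm_kalmanGain hQ.isSelfAdjoint hRsym hS]
    exact isPositive_josephForm hQ hR _
  have hAQ : analysisCov H R Q ≤ Q := by
    rw [le_def, sub_analysisCov_eq hQ.isSelfAdjoint hRsym hS]
    exact (isPositive_innovationCov hQ hR).conj_adjoint _
  exact ⟨hA, hAQ, norm_le_norm_of_nonneg_of_le ((nonneg_iff_isPositive _).2 hA) hAQ⟩
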